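/- arXiv:1903.00823 — 2 statements merged into one kernel-verified Lean document; each statement's English description precedes it below -/
import Mathlib

section
/- For every dominant weight λ = (a, b) (with a, b ≥ 0) of the root system of type G₂ and every w ∈ W, the following are equivalent: (i) there exist integers k ≥ q ≥ 0 such that w(λ + ρ) − ρ = (2k + q)α + (k + q)β; (ii) w⁻¹(α) and w⁻¹(β) are both positive roots. Moreover, when (ii) holds, the integers are given by q = ⟨w(λ+ρ) − ρ, β∨⟩ and k = ⟨w(λ+ρ) − ρ, α∨ + β∨⟩. -/
/-!
Weight lattice of G₂ in fundamental-weight coordinates: a weight λ is the pair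
(⟨λ, α∨⟩, ⟨λ, β∨⟩) ∈ ℤ × ℤ. In these coordinates the simple roots are
α = (2, -1) (short) and β = (-3, 2) (long), and ρ = (1, 1).
-/

/-- The simple reflection `s_α (a, b) = (-a, a + b)` as a linear automorphism of ℤ². -/
def G2.sα : (ℤ × ℤ) ≃ₗ[ℤ] (ℤ × ℤ) where
  toFun p := (-p.1, p.1 + p.2)
  invFun p := (-p.1, p.1 + p.2)
  map_add' x y := by
    simp only [Prod.ext_iff, Prod.fst_add, Prod.snd_add, Prod.smul_def, smul_eq_mul,
      RingHom.id_apply, Prod.mk.injEq, Prod.fst_neg, Prod.snd_neg]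
    constructor <;> ring
  map_smul' c x := by
    simp only [Prod.ext_iff, Prod.fst_add, Prod.snd_add, Prod.smul_def, smul_eq_mul,
      RingHom.id_apply, Prod.mk.injEq, Prod.fst_neg, Prod.snd_neg]
    constructor <;> ring
  left_inv p := by
    simp only [Prod.ext_iff, Prod.fst_add, Prod.snd_add, Prod.smul_def, smul_eq_mul,
      RingHom.id_apply, Prod.mk.injEq, Prod.fst_neg, Prod.snd_neg]
    constructor <;> ring
  right_inv p := by
    simp only [Prod.ext_iff, Prod.fst_add, Prod.snd_add, Prod.smul_def, smul_eq_mul,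
      RingHom.id_apply, Prod.mk.injEq, Prod.fst_neg, Prod.snd_neg]
    constructor <;> ring

/-- The simple reflection `s_β (a, b) = (a + 3b, -b)` as a linear automorphism of ℤ². -/
def G2.sβ : (ℤ × ℤ) ≃ₗ[ℤ] (ℤ × ℤ) where
  toFun p := (p.1 + 3 * p.2, -p.2)
  invFun p := (p.1 + 3 * p.2, -p.2)
  map_add' x y := by
    simp only [Prod.ext_iff, Prod.fst_add, Prod.snd_add, Prod.smul_def, smul_eq_mul,
      RingHom.id_apply, Prod.mk.injEq, Prod.fst_neg, Prod.snd_neg]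
    constructor <;> ring
  map_smul' c x := by
    simp only [Prod.ext_iff, Prod.fst_add, Prod.snd_add, Prod.smul_def, smul_eq_mul,
      RingHom.id_apply, Prod.mk.injEq, Prod.fst_neg, Prod.snd_neg]
    constructor <;> ring
  left_inv p := by
    simp only [Prod.ext_iff, Prod.fst_add, Prod.snd_add, Prod.smul_def, smul_eq_mul,
      RingHom.id_apply, Prod.mk.injEq, Prod.fst_neg, Prod.snd_neg]
    constructor <;> ring
  right_inv p := by
    simp only [Prod.ext_iff, Prod.fst_add, Prod.snd_add, Prod.smul_def, smul_eq_mul,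
      RingHom.id_apply, Prod.mk.injEq, Prod.fst_neg, Prod.snd_neg]
    constructor <;> ring

/-- The Weyl group of G₂: the subgroup of linear automorphisms of the weight lattice ℤ²
generated by the two simple reflections. -/
def G2.W : Subgroup ((ℤ × ℤ) ≃ₗ[ℤ] (ℤ × ℤ)) := Subgroup.closure {G2.sα, G2.sβ}

/-- The short simple root α = (2, -1) in fundamental-weight coordinates. -/
def G2.α : ℤ × ℤ := (2, -1)

/-- The long simple root β = (-3, 2) in fundamental-weight coordinates. -/
def G2.β : ℤ × ℤ := (-3, 2)

/-- The half sum ρ = (1, 1) of the positive roots. -/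
def G2.ρ : ℤ × ℤ := (1, 1)

/-- The six positive roots of G₂ in fundamental-weight coordinates:
α, β, α+β, 2α+β, 3α+β, 3α+2β. -/
def G2.PosRoots : Set (ℤ × ℤ) := {(2, -1), (-3, 2), (-1, 1), (1, 0), (3, -1), (0, 1)}

/-!
The whole statement reduces to `w = 1`. Since `(2k + q)α + (k + q)β = (k - q, q)`, condition (i)
says that `w(λ + ρ) - ρ` is dominant, i.e. that `w` keeps the regular dominant weight `λ + ρ` in
the open dominant chamber; and (ii) says that `w⁻¹` sends both simple roots to positive roots.
Each of these characterises the identity among the twelve elements of `W`, listed by their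
matrices.
-/

namespace G2

def cols (w : (ℤ × ℤ) ≃ₗ[ℤ] (ℤ × ℤ)) : (ℤ × ℤ) × (ℤ × ℤ) := (w (1, 0), w (0, 1))

lemma apply_eq_cols (w : (ℤ × ℤ) ≃ₗ[ℤ] (ℤ × ℤ)) (p : ℤ × ℤ) :
    w p = p.1 • (cols w).1 + p.2 • (cols w).2 := by
  conv_lhs => rw [show p = p.1 • ((1 : ℤ), (0 : ℤ)) + p.2 • ((0 : ℤ), (1 : ℤ)) by simp]
  rw [map_add, map_smul, map_smul, cols]

lemma eq_one_iff_cols (w : (ℤ × ℤ) ≃ₗ[ℤ] (ℤ × ℤ)) : w = 1 ↔ cols w = ((1, 0), (0, 1)) := by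
  refine ⟨by rintro rfl; rfl, fun h => LinearEquiv.ext fun p => ?_⟩
  rw [apply_eq_cols, h]
  simp

def weylCols : Finset ((ℤ × ℤ) × (ℤ × ℤ)) :=
  {((1, 0), (0, 1)), ((-1, 1), (0, 1)), ((1, 0), (3, -1)), ((-1, 1), (-3, 2)),
   ((2, -1), (3, -1)), ((-2, 1), (-3, 2)), ((2, -1), (3, -2)), ((-2, 1), (-3, 1)),
   ((1, -1), (3, -2)), ((-1, 0), (-3, 1)), ((1, -1), (0, -1)), ((-1, 0), (0, -1))}

lemma weylCols_closed : ∀ c ∈ weylCols,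
    (sα c.1, sα c.2) ∈ weylCols ∧ (sβ c.1, sβ c.2) ∈ weylCols := by
  decide

theorem cols_mem_weylCols {w : (ℤ × ℤ) ≃ₗ[ℤ] (ℤ × ℤ)} (hw : w ∈ W) : cols w ∈ weylCols := by
  have hs : ∀ s ∈ ({sα, sβ} : Set ((ℤ × ℤ) ≃ₗ[ℤ] (ℤ × ℤ))), ∀ c ∈ weylCols,
      (s c.1, s c.2) ∈ weylCols := by
    rintro s (rfl | rfl) c hc
    exacts [(weylCols_closed c hc).1, (weylCols_closed c hc).2]
  induction hw using Subgroup.closure_induction_left with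
  | one => decide
  | mul_left s hs' y _ ih => exact hs s hs' _ ih
  | inv_mul_cancel s hs' y _ ih =>
    have hinv : s⁻¹ = s := by rcases hs' with rfl | rfl <;> rfl
    rw [hinv]
    exact hs s hs' _ ih

lemma weylCols_simpleRoots_mem_posRoots_iff : ∀ c ∈ weylCols,
    (α.1 • c.1 + α.2 • c.2 ∈ PosRoots ∧ β.1 • c.1 + β.2 • c.2 ∈ PosRoots) ↔
      c = ((1, 0), (0, 1)) := by
  simp only [PosRoots, Set.mem_insert_iff, Set.mem_singleton_iff]
  decide

theorem apply_simpleRoots_mem_posRoots_iff {v : (ℤ × ℤ) ≃ₗ[ℤ] (ℤ × ℤ)} (hv : v ∈ W) :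
    v α ∈ PosRoots ∧ v β ∈ PosRoots ↔ v = 1 := by
  rw [apply_eq_cols v α, apply_eq_cols v β, eq_one_iff_cols]
  exact weylCols_simpleRoots_mem_posRoots_iff _ (cols_mem_weylCols hv)

/-- Row `i` of the matrix of `w` expresses `w⁻¹` of the `i`-th simple coroot in the simple
coroots, so for `w ≠ 1` some row is a negative coroot. -/
lemma weylCols_exists_neg_row : ∀ c ∈ weylCols, c ≠ ((1, 0), (0, 1)) →
    (c.1.1 ≤ 0 ∧ c.2.1 ≤ 0 ∧ c.1.1 + c.2.1 < 0) ∨ (c.1.2 ≤ 0 ∧ c.2.2 ≤ 0 ∧ c.1.2 + c.2.2 < 0) := by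
  decide

theorem one_le_apply_iff {w : (ℤ × ℤ) ≃ₗ[ℤ] (ℤ × ℤ)} (hw : w ∈ W) {μ : ℤ × ℤ}
    (hμ₁ : 1 ≤ μ.1) (hμ₂ : 1 ≤ μ.2) : 1 ≤ (w μ).1 ∧ 1 ≤ (w μ).2 ↔ w = 1 := by
  refine ⟨fun ⟨h₁, h₂⟩ => ?_, by rintro rfl; exact ⟨hμ₁, hμ₂⟩⟩
  by_contra hne
  rw [eq_one_iff_cols] at hne
  simp only [apply_eq_cols w μ, Prod.fst_add, Prod.snd_add, Prod.smul_fst, Prod.smul_snd,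
    smul_eq_mul] at h₁ h₂
  rcases weylCols_exists_neg_row _ (cols_mem_weylCols hw) hne with ⟨h, h', h''⟩ | ⟨h, h', h''⟩
  · nlinarith
  · nlinarith

lemma smul_α_add_smul_β (k q : ℤ) : (2 * k + q) • α + (k + q) • β = (k - q, q) := by
  simp only [α, β, Prod.smul_mk, smul_eq_mul, Prod.mk_add_mk, Prod.mk.injEq]
  constructor <;> ring

lemma exists_smul_α_add_smul_β_iff (v : ℤ × ℤ) :
    (∃ k q : ℤ, 0 ≤ q ∧ q ≤ k ∧ v = (2 * k + q) • α + (k + q) • β) ↔ 0 ≤ v.1 ∧ 0 ≤ v.2 := by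
  simp only [smul_α_add_smul_β]
  constructor
  · rintro ⟨k, q, hq, hqk, rfl⟩
    exact ⟨by simpa using hqk, hq⟩
  · rintro ⟨h₁, h₂⟩
    exact ⟨v.1 + v.2, v.2, h₂, by omega, by ext <;> simp⟩

end G2

/-- For a dominant weight λ = (a, b) of G₂ and w ∈ W:
(i) there exist integers k ≥ q ≥ 0 with w(λ+ρ) − ρ = (2k+q)α + (k+q)β, iff
(ii) w⁻¹(α) and w⁻¹(β) are both positive roots; moreover when (ii) holds the integers
are given by q = ⟨w(λ+ρ) − ρ, β∨⟩ and k = ⟨w(λ+ρ) − ρ, α∨ + β∨⟩ (in the chosen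
coordinates, q is the second component of w(λ+ρ) − ρ and k is the sum of the two
components). -/
theorem G2.exists_kq_iff_inv_pos (a b : ℤ) (ha : 0 ≤ a) (hb : 0 ≤ b)
    (w : (ℤ × ℤ) ≃ₗ[ℤ] (ℤ × ℤ)) (hw : w ∈ G2.W) :
    ((∃ k q : ℤ, 0 ≤ q ∧ q ≤ k ∧
        w ((a, b) + G2.ρ) - G2.ρ = (2 * k + q) • G2.α + (k + q) • G2.β)
      ↔ (w⁻¹ G2.α ∈ G2.PosRoots ∧ w⁻¹ G2.β ∈ G2.PosRoots))
    ∧ ((w⁻¹ G2.α ∈ G2.PosRoots ∧ w⁻¹ G2.β ∈ G2.PosRoots) →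
        -- when (ii) holds, the integers are q = ⟨w(λ+ρ) − ρ, β∨⟩ and
        -- k = ⟨w(λ+ρ) − ρ, α∨ + β∨⟩, i.e. in these coordinates
        -- q = (w(λ+ρ) − ρ).2 and k = (w(λ+ρ) − ρ).1 + (w(λ+ρ) − ρ).2:
        (0 ≤ (w ((a, b) + G2.ρ) - G2.ρ).2 ∧
         (w ((a, b) + G2.ρ) - G2.ρ).2 ≤
            (w ((a, b) + G2.ρ) - G2.ρ).1 + (w ((a, b) + G2.ρ) - G2.ρ).2 ∧
         w ((a, b) + G2.ρ) - G2.ρ =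
            (2 * ((w ((a, b) + G2.ρ) - G2.ρ).1 + (w ((a, b) + G2.ρ) - G2.ρ).2)
              + (w ((a, b) + G2.ρ) - G2.ρ).2) • G2.α
            + (((w ((a, b) + G2.ρ) - G2.ρ).1 + (w ((a, b) + G2.ρ) - G2.ρ).2)
              + (w ((a, b) + G2.ρ) - G2.ρ).2) • G2.β) ∧
        ∀ k q : ℤ, 0 ≤ q → q ≤ k →
          w ((a, b) + G2.ρ) - G2.ρ = (2 * k + q) • G2.α + (k + q) • G2.β →
            q = (w ((a, b) + G2.ρ) - G2.ρ).2 ∧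
            k = (w ((a, b) + G2.ρ) - G2.ρ).1 + (w ((a, b) + G2.ρ) - G2.ρ).2) := by
  have hμ : (a, b) + G2.ρ = (a + 1, b + 1) := rfl
  have h_i : (∃ k q : ℤ, 0 ≤ q ∧ q ≤ k ∧
      w ((a, b) + G2.ρ) - G2.ρ = (2 * k + q) • G2.α + (k + q) • G2.β) ↔ w = 1 := by
    rw [G2.exists_smul_α_add_smul_β_iff, hμ,
      ← G2.one_le_apply_iff hw (μ := (a + 1, b + 1)) (by simpa) (by simpa)]
    simp only [G2.ρ, Prod.fst_sub, Prod.snd_sub, sub_nonneg]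
  have h_ii : (w⁻¹ G2.α ∈ G2.PosRoots ∧ w⁻¹ G2.β ∈ G2.PosRoots) ↔ w = 1 := by
    rw [G2.apply_simpleRoots_mem_posRoots_iff (inv_mem hw), inv_eq_one]
  rw [h_i, h_ii]
  refine ⟨Iff.rfl, ?_⟩
  rintro rfl
  simp only [LinearEquiv.coe_one, id_eq, add_sub_cancel_right, G2.smul_α_add_smul_β,
    Prod.ext_iff]
  exact ⟨⟨hb, by omega, trivial⟩, fun k q _ _ h => ⟨by omega, by omega⟩⟩
end

section
/- For every dominant weight λ = (a, b) (with a, b ≥ 0) of the root system of type G₂, there exists exactly one triple (w, k, q) consisting of w ∈ W and integers k ≥ q ≥ 0 such that w(λ + ρ) − ρ = (2k + q)α + (k + q)β; moreover for this triple w = 1, k = a + b, and q = b. (This is the combinatorial content of the statement that every irreducible algebraic representation of G₂ occurs with multiplicity exactly one in the ring of regular functions on the 8-dimensional nilpotent orbit.) -/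
/-!
The Weyl group of G₂ is the dihedral group of order 12, so every `w ∈ W` acts by one of twelve
explicit integer matrices. Writing out the dominant-weight inequalities for each of them shows
that the identity is the only element of `W` sending a weight with both coordinates positive to
another such weight. Since `λ + ρ` has positive coordinates and
`(2k + q)α + (k + q)β + ρ = (k - q + 1, q + 1)` has positive coordinates exactly when
`0 ≤ q ≤ k`, this forces `w = 1`, and comparing coordinates gives `k = a + b`, `q = b`.
-/

namespace G2

def act (m : Matrix (Fin 2) (Fin 2) ℤ) (p : ℤ × ℤ) : ℤ × ℤ :=
  (m 0 0 * p.1 + m 0 1 * p.2, m 1 0 * p.1 + m 1 1 * p.2)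

lemma act_one (p : ℤ × ℤ) : act 1 p = p := by
  simp [act]

lemma act_mul (m n : Matrix (Fin 2) (Fin 2) ℤ) (p : ℤ × ℤ) :
    act (m * n) p = act m (act n p) := by
  simp only [act, Matrix.mul_apply, Fin.sum_univ_two, Prod.mk.injEq]
  constructor <;> ring

lemma sα_apply (p : ℤ × ℤ) : sα p = act !![-1, 0; 1, 1] p := by
  simp [sα, act]

lemma sβ_apply (p : ℤ × ℤ) : sβ p = act !![1, 3; 0, -1] p := by
  simp [sβ, act]

lemma sα_inv : sα⁻¹ = sα := LinearEquiv.ext fun _ => rfl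

lemma sβ_inv : sβ⁻¹ = sβ := LinearEquiv.ext fun _ => rfl

/-- The elements of the dihedral group `W` of order 12, as matrices acting on ℤ². -/
def weylMatrices : List (Matrix (Fin 2) (Fin 2) ℤ) :=
  [!![1, 0; 0, 1], !![-1, 0; 1, 1], !![1, 3; 0, -1], !![-2, -3; 1, 1], !![-2, -3; 1, 2],
   !![-1, -3; 0, 1], !![-1, -3; 1, 2], !![-1, 0; 0, -1], !![1, 0; -1, -1], !![1, 3; -1, -2],
   !![2, 3; -1, -2], !![2, 3; -1, -1]]

lemma simple_mul_mem_weylMatrices : ∀ m ∈ weylMatrices,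
    !![-1, 0; 1, 1] * m ∈ weylMatrices ∧ !![1, 3; 0, -1] * m ∈ weylMatrices := by
  decide

lemma exists_mem_weylMatrices_of_mem_W {w : (ℤ × ℤ) ≃ₗ[ℤ] (ℤ × ℤ)} (hw : w ∈ W) :
    ∃ m ∈ weylMatrices, ∀ p, w p = act m p := by
  have mul_simple : ∀ x ∈ ({sα, sβ} : Set ((ℤ × ℤ) ≃ₗ[ℤ] (ℤ × ℤ))), ∀ y : (ℤ × ℤ) ≃ₗ[ℤ] (ℤ × ℤ),
      (∃ m ∈ weylMatrices, ∀ p, y p = act m p) →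
        ∃ m ∈ weylMatrices, ∀ p, (x * y) p = act m p := by
    rintro x (rfl | rfl) y ⟨m, hm, hy⟩
    · exact ⟨_, (simple_mul_mem_weylMatrices m hm).1, fun p => by
        rw [LinearEquiv.mul_apply, hy, sα_apply, act_mul]⟩
    · exact ⟨_, (simple_mul_mem_weylMatrices m hm).2, fun p => by
        rw [LinearEquiv.mul_apply, hy, sβ_apply, act_mul]⟩
  induction hw using Subgroup.closure_induction_left with
  | one => exact ⟨1, by decide, fun p => (act_one p).symm⟩
  | mul_left x hx y _ ih => exact mul_simple x hx y ih
  | inv_mul_cancel x hx y _ ih =>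
    rcases hx with rfl | rfl
    · rw [sα_inv]; exact mul_simple _ (by simp) y ih
    · rw [sβ_inv]; exact mul_simple _ (by simp) y ih

lemma eq_one_of_mem_weylMatrices {m : Matrix (Fin 2) (Fin 2) ℤ} (hm : m ∈ weylMatrices)
    {v : ℤ × ℤ} (hv₁ : 0 < v.1) (hv₂ : 0 < v.2) (hmv₁ : 0 < (act m v).1)
    (hmv₂ : 0 < (act m v).2) : m = 1 := by
  simp only [weylMatrices, List.mem_cons, List.not_mem_nil, or_false] at hm
  rcases hm with rfl | rfl | rfl | rfl | rfl | rfl | rfl | rfl | rfl | rfl | rfl | rfl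
  · exact Matrix.one_fin_two.symm
  all_goals
    simp only [act, Matrix.of_apply, Matrix.cons_val', Matrix.cons_val_zero, Matrix.cons_val_one,
      Matrix.cons_val_fin_one] at hmv₁ hmv₂
    omega

lemma eq_one_of_mem_W {w : (ℤ × ℤ) ≃ₗ[ℤ] (ℤ × ℤ)} (hw : w ∈ W) {x y x' y' : ℤ}
    (hwv : w (x, y) = (x', y')) (hx : 0 < x) (hy : 0 < y) (hx' : 0 < x') (hy' : 0 < y') :
    w = 1 := by
  obtain ⟨m, hm, hwm⟩ := exists_mem_weylMatrices_of_mem_W hw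
  have hmv : act m (x, y) = (x', y') := (hwm (x, y)).symm.trans hwv
  obtain rfl := eq_one_of_mem_weylMatrices hm (v := (x, y)) hx hy (by rwa [hmv]) (by rwa [hmv])
  exact LinearEquiv.ext fun p => (hwm p).trans (act_one p)

lemma sub_ρ_eq_iff (v : ℤ × ℤ) (k q : ℤ) :
    v - ρ = (2 * k + q) • α + (k + q) • β ↔ v = (k - q + 1, q + 1) := by
  rw [sub_eq_iff_eq_add]
  simp only [α, β, ρ, Prod.ext_iff, Prod.smul_mk, smul_eq_mul, Prod.fst_add, Prod.snd_add]
  constructor <;> rintro ⟨h₁, h₂⟩ <;> constructor <;> linarith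

end G2

/-- For every dominant weight λ = (a, b) of G₂, there is exactly one
triple (w, k, q) with w ∈ W and integers k ≥ q ≥ 0 such that
w(λ+ρ) − ρ = (2k+q)α + (k+q)β; moreover this triple is (1, a+b, b). -/
theorem G2.existsUnique_triple (a b : ℤ) (ha : 0 ≤ a) (hb : 0 ≤ b) :
    (∃! t : ((ℤ × ℤ) ≃ₗ[ℤ] (ℤ × ℤ)) × ℤ × ℤ,
        t.1 ∈ G2.W ∧ 0 ≤ t.2.2 ∧ t.2.2 ≤ t.2.1 ∧
          t.1 ((a, b) + G2.ρ) - G2.ρ = (2 * t.2.1 + t.2.2) • G2.α + (t.2.1 + t.2.2) • G2.β)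
    ∧ (∀ (w : (ℤ × ℤ) ≃ₗ[ℤ] (ℤ × ℤ)) (k q : ℤ), w ∈ G2.W → 0 ≤ q → q ≤ k →
        w ((a, b) + G2.ρ) - G2.ρ = (2 * k + q) • G2.α + (k + q) • G2.β →
          w = 1 ∧ k = a + b ∧ q = b) := by
  have hv : (a, b) + ρ = (a + 1, b + 1) := rfl
  have uniq : ∀ (w : (ℤ × ℤ) ≃ₗ[ℤ] (ℤ × ℤ)) (k q : ℤ), w ∈ W → 0 ≤ q → q ≤ k →
      w ((a, b) + ρ) - ρ = (2 * k + q) • α + (k + q) • β → w = 1 ∧ k = a + b ∧ q = b := by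
    intro w k q hw hq hqk h
    rw [sub_ρ_eq_iff, hv] at h
    obtain rfl : w = 1 := eq_one_of_mem_W hw h (by omega) (by omega) (by omega) (by omega)
    obtain ⟨h₁, h₂⟩ := Prod.mk.inj (h : (a + 1, b + 1) = (k - q + 1, q + 1))
    exact ⟨rfl, by omega, by omega⟩
  refine ⟨⟨(1, a + b, b), ⟨one_mem W, hb, show b ≤ a + b by omega, ?_⟩, ?_⟩, uniq⟩
  · change (a, b) + ρ - ρ = (2 * (a + b) + b) • α + (a + b + b) • β
    rw [sub_ρ_eq_iff, hv, Prod.mk.injEq]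
    omega
  · rintro ⟨w, k, q⟩ ⟨hw, hq, hqk, h⟩
    obtain ⟨rfl, rfl, rfl⟩ := uniq w k q hw hq hqk h
    rfl
end
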